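/- Let G be an undirected graph, s,t nonadjacent, D ⊆ V(G)\{s,t}, T a minimum ({s}∪D),t-separator, T' = N_G(C_s(G−T)), and G' = G[C_s(G−T) ∪ T' ∪ C_t(G−T)]. Then every minimal s,t-separator S of G' with S ⊆ T' ∪ C_t(G'−T') satisfies |S| ≥ |T'|. -/

import Mathlib

open SimpleGraph

variable {V : Type*}

/-- `u` can reach `v` in `G − S`: there is a walk whose support avoids `S`. -/
def ReachAvoid (G : SimpleGraph V) (S : Set V) (u v : V) : Prop :=
  ∃ p : G.Walk u v, ∀ w ∈ p.support, w ∉ S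

/-- The union of the connected components of `G − S` that meet `X`. -/
def SetReach (G : SimpleGraph V) (S X : Set V) : Set V :=
  {v | ∃ x ∈ X, ReachAvoid G S x v}

/-- Open neighborhood of a vertex set: vertices outside `X` adjacent to some vertex of `X`. -/
def Nbhd (G : SimpleGraph V) (X : Set V) : Set V :=
  {v | v ∉ X ∧ ∃ x ∈ X, G.Adj x v}

/-- `S` is an `A,B`-separator of `G`. -/
def IsSep (G : SimpleGraph V) (A B S : Set V) : Prop :=
  Disjoint S A ∧ Disjoint S B ∧ ∀ a ∈ A, ∀ b ∈ B, ¬ ReachAvoid G S a b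

/-- `S` is an inclusion-minimal `A,B`-separator of `G`. -/
def IsMinlSep (G : SimpleGraph V) (A B S : Set V) : Prop :=
  IsSep G A B S ∧ ∀ S' ⊂ S, ¬ IsSep G A B S'

/-- `S` is a minimum-cardinality `A,B`-separator of `G`. -/
def IsMinSep (G : SimpleGraph V) (A B S : Set V) : Prop :=
  IsSep G A B S ∧ ∀ S', IsSep G A B S' → S.ncard ≤ S'.ncard

/-- The minimum cardinality of an `A,B`-separator of `G` (`∞` if none exists). -/
noncomputable def kappa (G : SimpleGraph V) (A B : Set V) : ℕ∞ :=
  sInf {n : ℕ∞ | ∃ S : Set V, IsSep G A B S ∧ (S.ncard : ℕ∞) = n}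

/-- `S` is an `A,B`-separator of the induced subgraph `G[W]`. -/
def IsSepIn (G : SimpleGraph V) (W A B S : Set V) : Prop :=
  S ⊆ W ∧ Disjoint S A ∧ Disjoint S B ∧ ∀ a ∈ A, ∀ b ∈ B, ¬ ReachAvoid G (S ∪ Wᶜ) a b

/-- `S` is an inclusion-minimal `A,B`-separator of the induced subgraph `G[W]`. -/
def IsMinlSepIn (G : SimpleGraph V) (W A B S : Set V) : Prop :=
  IsSepIn G W A B S ∧ ∀ S' ⊂ S, ¬ IsSepIn G W A B S'

/-!
Let `C_s`, `C_t` be the components of `s`, `t` in `G − T` and `T' = N(C_s) ⊆ T`. A separator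
`S ⊆ T' ∪ C_t(G' − T')` of `G'` misses `C_s`, and `S ∪ (T \ T')` separates `{s} ∪ D` from `t` in `G`:
a walk from `{s} ∪ D` to `t` avoiding it enters the part of `G − (S ∪ T)` reachable from `t`
through some `x ∈ T'`, and a neighbour of `x` in `C_s` then closes an `s,t`-walk of `G'` avoiding
`S`. Minimality of `T` gives `|T| ≤ |S| + |T \ T'|`, that is `|T'| ≤ |S|`.
-/

variable {G : SimpleGraph V}

namespace ReachAvoid

variable {S : Set V} {u v w : V}

lemma symm (h : ReachAvoid G S u v) : ReachAvoid G S v u := by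
  obtain ⟨p, hp⟩ := h
  exact ⟨p.reverse, fun x hx => hp x (by simpa using hx)⟩

lemma trans (huv : ReachAvoid G S u v) (hvw : ReachAvoid G S v w) : ReachAvoid G S u w := by
  obtain ⟨p, hp⟩ := huv
  obtain ⟨q, hq⟩ := hvw
  refine ⟨p.append q, fun x hx => ?_⟩
  rcases (Walk.mem_support_append_iff p q).mp hx with hx | hx
  exacts [hp x hx, hq x hx]

lemma of_adj (h : G.Adj u v) (hu : u ∉ S) (hv : v ∉ S) : ReachAvoid G S u v :=
  ⟨Walk.cons h Walk.nil, by simp [hu, hv]⟩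

lemma notMem_right (h : ReachAvoid G S u v) : v ∉ S :=
  let ⟨p, hp⟩ := h
  hp v p.end_mem_support

lemma mono {S' : Set V} (hS : S' ⊆ S) (h : ReachAvoid G S u v) : ReachAvoid G S' u v := by
  obtain ⟨p, hp⟩ := h
  exact ⟨p, fun x hx hxS' => hp x hx (hS hxS')⟩

end ReachAvoid

section SetReach

variable {S X : Set V} {x y v : V}

lemma mem_setReach_singleton : v ∈ SetReach G S {x} ↔ ReachAvoid G S x v := by
  simp [SetReach]

lemma notMem_of_mem_setReach (h : v ∈ SetReach G S X) : v ∉ S :=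
  let ⟨_, _, hxv⟩ := h
  hxv.notMem_right

lemma subset_setReach (h : Disjoint X S) : X ⊆ SetReach G S X :=
  fun x hx => ⟨x, hx, Walk.nil, by simpa using h.notMem_of_mem_left hx⟩

lemma setReach_subset_setReach {S' X' : Set V} (hS : S' ⊆ S) (hX : X ⊆ X') :
    SetReach G S X ⊆ SetReach G S' X' :=
  fun _ ⟨x, hx, h⟩ => ⟨x, hX hx, h.mono hS⟩

lemma mem_setReach_of_adj (hy : y ∈ SetReach G S X) (hyv : G.Adj y v) (hv : v ∉ S) :
    v ∈ SetReach G S X := by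
  obtain ⟨x, hx, hxy⟩ := hy
  exact ⟨x, hx, hxy.trans (.of_adj hyv (notMem_of_mem_setReach ⟨x, hx, hxy⟩) hv)⟩

lemma nbhd_setReach_subset : Nbhd G (SetReach G S X) ⊆ S := by
  rintro v ⟨hv, y, hy, hyv⟩
  by_contra hvS
  exact hv (mem_setReach_of_adj hy hyv hvS)

lemma SimpleGraph.Walk.exists_mem_support_nbhd_setReach {u w : V} (p : G.Walk u w)
    (hu : u ∈ SetReach G S X) (hw : w ∉ SetReach G S X) :
    ∃ v ∈ p.support, v ∈ Nbhd G (SetReach G S X) := by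
  obtain ⟨d, hd, hfst, hsnd⟩ := p.exists_boundary_dart _ hu hw
  exact ⟨d.snd, p.dart_snd_mem_support_of_mem_darts hd, hsnd, d.fst, hfst, d.adj⟩

lemma ReachAvoid.of_disjoint_setReach {U : Set V} (h : ReachAvoid G S x v)
    (hU : Disjoint (SetReach G S {x}) U) : ReachAvoid G U x v := by
  classical
  obtain ⟨p, hp⟩ := h
  refine ⟨p, fun w hw => hU.notMem_of_mem_left (mem_setReach_singleton.mpr ?_)⟩
  exact ⟨p.takeUntil w hw, fun z hz => hp z (p.support_takeUntil_subset_support hw hz)⟩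

lemma IsSep.disjoint_setReach {A B : Set V} (h : IsSep G A B S) :
    Disjoint (SetReach G S A) (SetReach G S B) := by
  refine Set.disjoint_left.mpr fun v ⟨a, ha, hav⟩ ⟨b, hb, hbv⟩ => ?_
  exact h.2.2 a ha b hb (hav.trans hbv.symm)

end SetReach

section Separator

variable {A T S W : Set V} {s t : V}

lemma IsSep.not_reachAvoid_union_sdiff_nbhd (hT : IsSep G A {t} T)
    (hW : SetReach G T {s} ∪ Nbhd G (SetReach G T {s}) ∪ SetReach G T {t} ⊆ W)
    (hSs : Disjoint (SetReach G T {s}) S) (hS : ¬ ReachAvoid G (S ∪ Wᶜ) s t) :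
    ∀ a ∈ A, ¬ ReachAvoid G (S ∪ (T \ Nbhd G (SetReach G T {s}))) a t := by
  rintro a ha ⟨P, hP⟩
  set R := SetReach G (S ∪ T) {t}
  have hRt : R ⊆ SetReach G T {t} := setReach_subset_setReach Set.subset_union_right le_rfl
  have htR : t ∈ R := subset_setReach (by
    simpa [Set.disjoint_singleton_left] using
      ⟨fun htS => hP t P.end_mem_support (.inl htS), hT.2.1.notMem_of_mem_right rfl⟩) rfl
  have haR : a ∉ R := fun haR =>
    hT.2.2 a ha t rfl (mem_setReach_singleton.mp (hRt haR)).symm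
  obtain ⟨x, hxP, hxR⟩ := P.reverse.exists_mem_support_nbhd_setReach htR haR
  have hxP' := hP x (by simpa using hxP)
  have hxT' : x ∈ Nbhd G (SetReach G T {s}) := by
    by_contra hx
    rcases nbhd_setReach_subset hxR with hxS | hxT
    exacts [hxP' (.inl hxS), hxP' (.inr ⟨hxT, hx⟩)]
  have hxS : x ∉ S ∪ Wᶜ := by
    rintro (hxS | hxW)
    exacts [hxP' (.inl hxS), hxW (hW (.inl (.inr hxT')))]
  obtain ⟨-, y, hyR, hyx⟩ := hxR
  obtain ⟨-, c, hc, hcx⟩ := hxT'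
  have hsc : ReachAvoid G (S ∪ Wᶜ) s c :=
    (mem_setReach_singleton.mp hc).of_disjoint_setReach
      (Set.disjoint_union_right.mpr ⟨hSs, Set.disjoint_compl_right_iff_subset.mpr
        fun v hv => hW (.inl (.inl hv))⟩)
  have hyt : ReachAvoid G (S ∪ Wᶜ) t y :=
    (mem_setReach_singleton.mp hyR).of_disjoint_setReach
      (Set.disjoint_union_right.mpr ⟨Set.disjoint_left.mpr fun v hv hvS =>
        notMem_of_mem_setReach hv (.inl hvS), Set.disjoint_compl_right_iff_subset.mpr
          fun v hv => hW (.inr (hRt hv))⟩)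
  exact hS (((hsc.trans (.of_adj hcx hsc.notMem_right hxS)).trans
    (.of_adj hyx.symm hxS hyt.notMem_right)).trans hyt.symm)

lemma IsSep.union_sdiff_nbhd (hT : IsSep G A {t} T)
    (hW : SetReach G T {s} ∪ Nbhd G (SetReach G T {s}) ∪ SetReach G T {t} ⊆ W)
    (hSA : Disjoint S A) (htS : t ∉ S) (hS : ¬ ReachAvoid G (S ∪ Wᶜ) s t)
    (hSs : Disjoint (SetReach G T {s}) S) :
    IsSep G A {t} (S ∪ (T \ Nbhd G (SetReach G T {s}))) := by
  refine ⟨Set.disjoint_union_left.mpr ⟨hSA, hT.1.mono_left Set.sdiff_subset⟩,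
    Set.disjoint_union_left.mpr ⟨Set.disjoint_singleton_right.mpr htS,
      hT.2.1.mono_left Set.sdiff_subset⟩, ?_⟩
  rintro a ha _ rfl
  exact hT.not_reachAvoid_union_sdiff_nbhd hW hSs hS a ha

end Separator

lemma Set.ncard_le_ncard_of_ncard_le_union_sdiff {α : Type*} {S T T' : Set α} (hT : T.Finite)
    (hT' : T' ⊆ T) (h : T.ncard ≤ (S ∪ (T \ T')).ncard) : T'.ncard ≤ S.ncard := by
  have := Set.ncard_union_le S (T \ T')
  have := Set.ncard_sdiff_add_ncard_of_subset hT' hT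
  omega

theorem minlSep_induced_card_ge_general {V : Type*} [Fintype V] (G : SimpleGraph V) (s t : V) (D : Set V)
    (T : Set V) (hT : IsMinSep G ({s} ∪ D) {t} T)
    (T' W : Set V) (hT' : T' = Nbhd G (SetReach G T {s}))
    (hW : W = SetReach G T {s} ∪ T' ∪ SetReach G T {t}) :
    ∀ S : Set V, IsMinlSepIn G W {s} {t} S →
      S ⊆ T' ∪ SetReach G (T' ∪ Wᶜ) {t} → T'.ncard ≤ S.ncard := by
  rintro S ⟨⟨-, hSs, hSt, hSsep⟩, -⟩ hSsub
  have hT'T : T' ⊆ T := hT' ▸ nbhd_setReach_subset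
  have hTW : T ⊆ T' ∪ Wᶜ := fun v hv => by
    refine or_iff_not_imp_left.mpr fun hvT' hvW => ?_
    rcases hW ▸ hvW with (hvs | hvT'') | hvt
    exacts [notMem_of_mem_setReach hvs hv, hvT' hvT'', notMem_of_mem_setReach hvt hv]
  have hSsub' : S ⊆ T ∪ SetReach G T {t} :=
    hSsub.trans (Set.union_subset_union hT'T (setReach_subset_setReach hTW le_rfl))
  have hdisj : Disjoint (T ∪ SetReach G T {t}) (SetReach G T ({s} ∪ D)) :=
    Set.disjoint_union_left.mpr ⟨Set.disjoint_left.mpr fun v hv hv' =>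
      notMem_of_mem_setReach hv' hv, hT.1.disjoint_setReach.symm⟩
  have hsep := hT.1.union_sdiff_nbhd (by rw [hW, hT'])
    (hdisj.mono hSsub' (subset_setReach hT.1.1.symm)) (Set.disjoint_singleton_right.mp hSt)
    (hSsep s rfl t rfl)
    (hdisj.mono hSsub' (setReach_subset_setReach le_rfl Set.subset_union_left)).symm
  exact Set.ncard_le_ncard_of_ncard_le_union_sdiff (Set.toFinite T) hT'T (hT' ▸ hT.2 _ hsep)

/-- Every minimal `s,t`-separator of `G' = G[C_s(G−T) ∪ T' ∪ C_t(G−T)]` contained in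
`T' ∪ C_t(G'−T')` has cardinality at least `|T'|`. -/
theorem minlSep_induced_card_ge {V : Type*} [Fintype V] (G : SimpleGraph V) (s t : V)
    (hst : s ≠ t) (hadj : ¬ G.Adj s t) (D : Set V) (hsD : s ∉ D) (htD : t ∉ D)
    (T : Set V) (hT : IsMinSep G ({s} ∪ D) {t} T)
    (T' W : Set V) (hT' : T' = Nbhd G (SetReach G T {s}))
    (hW : W = SetReach G T {s} ∪ T' ∪ SetReach G T {t}) :
    ∀ S : Set V, IsMinlSepIn G W {s} {t} S →
      S ⊆ T' ∪ SetReach G (T' ∪ Wᶜ) {t} → T'.ncard ≤ S.ncard :=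
  minlSep_induced_card_ge_general G s t D T hT T' W hT' hW
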